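/- Yang R-matrix: let n ≥ 1, λ ∈ ℂ, and let z, u, w ∈ ℂ be pairwise distinct. Define R(a,b) = 1 ⊗ 1 + (λ/(a−b)) P ∈ Mat_n(ℂ) ⊗ Mat_n(ℂ), where P = Σ_{i,j} E_{ij} ⊗ E_{ji}. Then R(z,u)₁₂ * R(z,w)₁₃ * R(u,w)₂₃ = R(u,w)₂₃ * R(z,w)₁₃ * R(z,u)₁₂ in Mat_n(ℂ)^{⊗3}. -/

import Mathlib

/-!
The three flips `P₁₂, P₁₃, P₂₃` realize the transpositions of `S₃` on `V ⊗ V ⊗ V`: they are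
involutions and `P₁₂ P₂₃ P₁₂ = P₂₃ P₁₂ P₂₃ = P₁₃`, because conjugating by a flip swaps the
corresponding tensor factors. Expanding both sides of the Yang–Baxter equation, whose
factors are `1 + a P₁₂`, `1 + b P₁₃`, `1 + c P₂₃`, all terms then agree except those of the two
3-cycles, whose coefficients differ by `±(a b + b c - a c)`; this vanishes for
`a = λ/(z-u)`, `b = λ/(z-w)`, `c = λ/(u-w)` by partial fractions.
-/

open scoped TensorProduct

noncomputable section

variable (M : Type) [Ring M] [Algebra ℂ M]

/-- Embedding of `M ⊗ M` into the first two factors of `M ⊗ M ⊗ M`. -/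
noncomputable def emb12 : (M ⊗[ℂ] M) →ₐ[ℂ] (M ⊗[ℂ] M) ⊗[ℂ] M :=
  Algebra.TensorProduct.includeLeft

/-- Embedding of `M ⊗ M` into the first and third factors of `M ⊗ M ⊗ M`. -/
noncomputable def emb13 : (M ⊗[ℂ] M) →ₐ[ℂ] (M ⊗[ℂ] M) ⊗[ℂ] M :=
  Algebra.TensorProduct.map Algebra.TensorProduct.includeLeft (AlgHom.id ℂ M)

/-- Embedding of `M ⊗ M` into the last two factors of `M ⊗ M ⊗ M`. -/
noncomputable def emb23 : (M ⊗[ℂ] M) →ₐ[ℂ] (M ⊗[ℂ] M) ⊗[ℂ] M :=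
  Algebra.TensorProduct.map Algebra.TensorProduct.includeRight (AlgHom.id ℂ M)

/-- The Yang–Baxter equation for `R ∈ M ⊗ M`. -/
def YBE (R : M ⊗[ℂ] M) : Prop :=
  emb12 M R * emb13 M R * emb23 M R = emb23 M R * emb13 M R * emb12 M R

/-- The matrix units `E i j`. -/
noncomputable def E (n : ℕ) (i j : Fin n) : Matrix (Fin n) (Fin n) ℂ :=
  Matrix.single i j 1

/-- The permutation (flip) matrix `P = Σ E_{ij} ⊗ E_{ji}`. -/
noncomputable def P (n : ℕ) : Matrix (Fin n) (Fin n) ℂ ⊗[ℂ] Matrix (Fin n) (Fin n) ℂ :=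
  ∑ i, ∑ j, E n i j ⊗ₜ[ℂ] E n j i

/-- The Yang R-matrix `R(a,b) = 1 ⊗ 1 + (λ/(a−b)) P`. -/
noncomputable def YangR (n : ℕ) (lam a b : ℂ) :
    Matrix (Fin n) (Fin n) ℂ ⊗[ℂ] Matrix (Fin n) (Fin n) ℂ :=
  1 + (lam / (a - b)) • P n

open TensorProduct Algebra.TensorProduct

lemma E_mul_E (n : ℕ) (i j k l : Fin n) :
    E n i j * E n k l = if j = k then E n i l else 0 := by
  unfold E
  split_ifs with h
  · subst h; simp
  · simp [h]

lemma P_mul_tmul_E (n : ℕ) (i j k l : Fin n) :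
    P n * (E n i j ⊗ₜ E n k l) = E n k j ⊗ₜ E n i l := by
  simp [P, Finset.sum_mul, tmul_mul_tmul, E_mul_E, ite_tmul, tmul_ite]

lemma tmul_E_mul_P (n : ℕ) (i j k l : Fin n) :
    (E n i j ⊗ₜ E n k l) * P n = E n i l ⊗ₜ E n k j := by
  simp [P, Finset.mul_sum, tmul_mul_tmul, E_mul_E, ite_tmul, tmul_ite]

lemma P_mul_tmul (n : ℕ) (x y : Matrix (Fin n) (Fin n) ℂ) :
    P n * (x ⊗ₜ y) = (y ⊗ₜ x) * P n := by
  have single_eq : ∀ (i j : Fin n) (c : ℂ), Matrix.single i j c = c • E n i j := by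
    intro i j c; simp [E]
  induction x using Matrix.induction_on' with
  | h_zero => simp
  | h_add x x' hx hx' => rw [add_tmul, tmul_add, mul_add, add_mul, hx, hx']
  | h_std_basis i j c =>
    induction y using Matrix.induction_on' with
    | h_zero => simp
    | h_add y y' hy hy' => rw [add_tmul, tmul_add, mul_add, add_mul, hy, hy']
    | h_std_basis k l d =>
      rw [single_eq, single_eq, smul_tmul_smul, smul_tmul_smul, mul_smul_comm, smul_mul_assoc,
        P_mul_tmul_E, tmul_E_mul_P, mul_comm]

lemma P_mul_P (n : ℕ) : P n * P n = 1 := by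
  calc P n * P n = ∑ i, ∑ j, E n j j ⊗ₜ E n i i := by
        conv_lhs => enter [2]; rw [P]
        simp only [Finset.mul_sum, P_mul_tmul_E]
    _ = (∑ j, E n j j) ⊗ₜ (∑ i, E n i i) := by
        rw [Finset.sum_comm, sum_tmul]; simp only [tmul_sum]
    _ = 1 := by simp only [E, Matrix.sum_single_one, one_def]

section Flip

variable {M}
variable {p : M ⊗[ℂ] M} (hp : ∀ x y : M, p * (x ⊗ₜ y) = (y ⊗ₜ x) * p)
include hp

lemma emb12_mul_emb23_of_flip (X : M ⊗[ℂ] M) :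
    emb12 M p * emb23 M X = emb13 M X * emb12 M p := by
  induction X using TensorProduct.induction_on with
  | zero => simp
  | add X Y hX hY => rw [map_add, map_add, mul_add, add_mul, hX, hY]
  | tmul x y => simp [emb12, emb13, emb23, tmul_mul_tmul, hp]

lemma emb23_mul_emb12_of_flip (X : M ⊗[ℂ] M) :
    emb23 M p * emb12 M X = emb13 M X * emb23 M p := by
  have commute_left : ∀ (x : M) (Z : M ⊗[ℂ] M),
      Commute (emb23 M Z) ((x ⊗ₜ 1) ⊗ₜ 1) := by
    intro x Z
    induction Z using TensorProduct.induction_on with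
    | zero => simp
    | add Z W hZ hW => rw [map_add]; exact hZ.add_left hW
    | tmul a b => simp [Commute, SemiconjBy, emb23, tmul_mul_tmul]
  induction X using TensorProduct.induction_on with
  | zero => simp
  | add X Y hX hY => rw [map_add, map_add, mul_add, add_mul, hX, hY]
  | tmul x y =>
    have split : emb12 M (x ⊗ₜ y) = (x ⊗ₜ 1) ⊗ₜ 1 * emb23 M (y ⊗ₜ 1) := by
      simp [emb12, emb23, tmul_mul_tmul]
    rw [split, ← mul_assoc, (commute_left x p).eq, mul_assoc, ← map_mul, hp, map_mul,
      ← mul_assoc]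
    congr 1
    simp [emb13, emb23, tmul_mul_tmul]

variable (hp2 : p * p = 1)
include hp2

lemma emb12_mul_emb23_mul_emb12_of_flip : emb12 M p * emb23 M p * emb12 M p = emb13 M p := by
  rw [emb12_mul_emb23_of_flip hp, mul_assoc, ← map_mul, hp2, map_one, mul_one]

lemma emb23_mul_emb12_mul_emb23_of_flip : emb23 M p * emb12 M p * emb23 M p = emb13 M p := by
  rw [emb23_mul_emb12_of_flip hp, mul_assoc, ← map_mul, hp2, map_one, mul_one]

end Flip

lemma yangBaxter_one_add_smul_of_braid {K R : Type*} [CommRing K] [Ring R] [Algebra K R]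
    {s t r : R}
    (hs : s * s = 1) (ht : t * t = 1) (hsts : s * t * s = r) (htst : t * s * t = r)
    {a b c : K} (habc : a * b + b * c = a * c) :
    (1 + a • s) * (1 + b • r) * (1 + c • t) = (1 + c • t) * (1 + b • r) * (1 + a • s) := by
  have hsr : s * r = t * s := by rw [← hsts, ← mul_assoc, ← mul_assoc, hs, one_mul]
  have hrs : r * s = s * t := by rw [← hsts, mul_assoc, hs, mul_one]
  have hrt : r * t = t * s := by rw [← htst, mul_assoc, ht, mul_one]
  have htr : t * r = s * t := by rw [← htst, ← mul_assoc, ← mul_assoc, ht, one_mul]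
  simp only [mul_add, add_mul, mul_one, one_mul, smul_mul_assoc, mul_smul_comm,
    hsr, hrs, hrt, htr, hsts, htst]
  linear_combination (norm := module) habc • (t * s - s * t)

lemma map_YangR {n : ℕ} {A : Type*} [Ring A] [Algebra ℂ A]
    (f : Matrix (Fin n) (Fin n) ℂ ⊗[ℂ] Matrix (Fin n) (Fin n) ℂ →ₐ[ℂ] A) (lam a b : ℂ) :
    f (YangR n lam a b) = 1 + (lam / (a - b)) • f (P n) := by
  rw [YangR, map_add, map_one, map_smul]

lemma yangR_coeff_relation {lam z u w : ℂ} (hzu : z ≠ u) (hzw : z ≠ w) (huw : u ≠ w) :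
    lam / (z - u) * (lam / (z - w)) + lam / (z - w) * (lam / (u - w))
      = lam / (z - u) * (lam / (u - w)) := by
  have := sub_ne_zero.mpr hzu
  have := sub_ne_zero.mpr hzw
  have := sub_ne_zero.mpr huw
  field_simp
  ring

theorem stmt19_general (n : ℕ) (lam : ℂ) (z u w : ℂ)
    (hzu : z ≠ u) (hzw : z ≠ w) (huw : u ≠ w) :
    emb12 (Matrix (Fin n) (Fin n) ℂ) (YangR n lam z u)
        * emb13 (Matrix (Fin n) (Fin n) ℂ) (YangR n lam z w)
        * emb23 (Matrix (Fin n) (Fin n) ℂ) (YangR n lam u w)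
      = emb23 (Matrix (Fin n) (Fin n) ℂ) (YangR n lam u w)
        * emb13 (Matrix (Fin n) (Fin n) ℂ) (YangR n lam z w)
        * emb12 (Matrix (Fin n) (Fin n) ℂ) (YangR n lam z u) := by
  have hflip := P_mul_tmul n
  have hsq := P_mul_P n
  simp only [map_YangR]
  exact yangBaxter_one_add_smul_of_braid
    (by rw [← map_mul, hsq, map_one]) (by rw [← map_mul, hsq, map_one])
    (emb12_mul_emb23_mul_emb12_of_flip hflip hsq) (emb23_mul_emb12_mul_emb23_of_flip hflip hsq)
    (yangR_coeff_relation hzu hzw huw)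

/-- The Yang R-matrix satisfies the Yang–Baxter equation with spectral
parameters. -/
theorem stmt19 (n : ℕ) (hn : 1 ≤ n) (lam : ℂ) (z u w : ℂ)
    (hzu : z ≠ u) (hzw : z ≠ w) (huw : u ≠ w) :
    emb12 (Matrix (Fin n) (Fin n) ℂ) (YangR n lam z u)
        * emb13 (Matrix (Fin n) (Fin n) ℂ) (YangR n lam z w)
        * emb23 (Matrix (Fin n) (Fin n) ℂ) (YangR n lam u w)
      = emb23 (Matrix (Fin n) (Fin n) ℂ) (YangR n lam u w)
        * emb13 (Matrix (Fin n) (Fin n) ℂ) (YangR n lam z w)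
        * emb12 (Matrix (Fin n) (Fin n) ℂ) (YangR n lam z u) :=
  stmt19_general n lam z u w hzu hzw huw
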